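/- Define f : ℝ×(−π/4, π/4) → ℂ by f(x,y) = exp(−1/(x·e^{iy})) for x > 0 and f(x,y) = 0 for x ≤ 0. Then f is smooth, satisfies x·∂_x f(x,y) + i·∂_y f(x,y) = 0 on all of ℝ×(−π/4,π/4), vanishes to infinite order on {0}×(−π/4,π/4), and is nonzero at every point with x > 0 (hence f is smooth and b-holomorphic but not real-analytic in any neighbourhood of (0,0)). -/

import Mathlib

/-!
STATEMENT 18.  On `ℝ×(−π/4, π/4)`, the function `f(x,y) = exp(−1/(x·e^{iy}))` for `x > 0`
and `f(x,y) = 0` for `x ≤ 0` is smooth, satisfies `x∂ₓf + i∂_yf = 0` (b-holomorphicity),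
vanishes to infinite order on `{0}×(−π/4,π/4)`, and is nonzero wherever `x > 0`.
-/


/-- `f(x,y) = exp(−1/(x·e^{iy}))` for `x > 0`, and `0` for `x ≤ 0`. -/
noncomputable def fFlat : ℝ × ℝ → ℂ := fun p =>
  if 0 < p.1 then Complex.exp (-1 / ((p.1 : ℂ) * Complex.exp (Complex.I * (p.2 : ℂ)))) else 0

/-- The domain `ℝ × (−π/4, π/4)`. -/
noncomputable def Ddom : Set (ℝ × ℝ) :=
  Set.univ ×ˢ Set.Ioo (-(Real.pi / 4)) (Real.pi / 4)

open Real Filter Set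

noncomputable section

def P1 : ℝ×ℝ →L[ℝ] ℂ := Complex.ofRealCLM.comp (ContinuousLinearMap.fst ℝ ℝ ℝ)
def P2 : ℝ×ℝ →L[ℝ] ℂ := Complex.ofRealCLM.comp (ContinuousLinearMap.snd ℝ ℝ ℝ)

@[simp] lemma P1_apply (h : ℝ×ℝ) : P1 h = (h.1 : ℂ) := rfl
@[simp] lemma P2_apply (h : ℝ×ℝ) : P2 h = (h.2 : ℂ) := rfl

def baseF : ℝ×ℝ → ℂ := fun p => Complex.exp (-(Complex.exp (-(Complex.I * p.2)) * (p.1:ℂ)⁻¹))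

def cut (g : ℝ×ℝ → ℂ) : ℝ×ℝ → ℂ := fun p => if 0 < p.1 then g p else 0

inductive MSym : (ℝ×ℝ → ℂ) → Prop
  | base : MSym baseF
  | invMul {g} : MSym g → MSym (fun p => (p.1:ℂ)⁻¹ * g p)
  | csmul {g} (c : ℝ → ℂ) (hc : ContDiff ℝ (⊤:ℕ∞) c) : MSym g → MSym (fun p => c p.2 * g p)
  | add {g h} : MSym g → MSym h → MSym (fun p => g p + h p)

lemma half_lt_cos {y : ℝ} (h : |y| < π/4) : 1/2 < Real.cos y := by
  nlinarith [Real.one_sub_sq_div_two_le_cos (x := y), Real.pi_lt_d2, abs_nonneg y, sq_abs y,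
    Real.pi_pos]

lemma norm_baseF {p : ℝ×ℝ} (hx : 0 < p.1) :
    ‖baseF p‖ = Real.exp (-(Real.cos p.2 * p.1⁻¹)) := by
  have h1 : -(Complex.I * (p.2:ℂ)) = ((-p.2 : ℝ) : ℂ) * Complex.I := by push_cast; ring
  rw [baseF, Complex.norm_exp]
  congr 1
  rw [h1, show ((p.1:ℂ))⁻¹ = ((p.1⁻¹ : ℝ) : ℂ) by push_cast; ring,
    mul_comm (Complex.exp _)]
  rw [Complex.neg_re, Complex.re_ofReal_mul, Complex.exp_ofReal_mul_I_re, Real.cos_neg]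
  ring

lemma norm_baseF_le {p : ℝ×ℝ} (hx : 0 < p.1) (hy : |p.2| < π/4) :
    ‖baseF p‖ ≤ Real.exp (-(2⁻¹ * p.1⁻¹)) := by
  rw [norm_baseF hx]
  apply Real.exp_le_exp.2
  have := half_lt_cos hy
  have hxi : (0:ℝ) < p.1⁻¹ := inv_pos.2 hx
  nlinarith

lemma MSym.bound {g} (hg : MSym g) : ∃ C : ℝ, 0 ≤ C ∧ ∃ d : ℕ, ∀ p : ℝ×ℝ,
    0 < p.1 → p.1 < 1 → |p.2| < π/4 →
    ‖g p‖ ≤ C * (p.1⁻¹ ^ d * Real.exp (-(2⁻¹ * p.1⁻¹))) := by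
  induction hg with
  | base =>
    exact ⟨1, zero_le_one, 0, fun p h1 h2 h3 => by simpa using norm_baseF_le h1 h3⟩
  | @invMul g hg ih =>
    obtain ⟨C, hC, d, hb⟩ := ih
    refine ⟨C, hC, d + 1, fun p h1 h2 h3 => ?_⟩
    have hxi : (0:ℝ) ≤ p.1⁻¹ := le_of_lt (inv_pos.2 h1)
    calc ‖((p.1:ℂ))⁻¹ * g p‖ = p.1⁻¹ * ‖g p‖ := by
          rw [norm_mul, norm_inv, Complex.norm_real, Real.norm_eq_abs, abs_of_pos h1]
      _ ≤ p.1⁻¹ * (C * (p.1⁻¹ ^ d * Real.exp (-(2⁻¹ * p.1⁻¹)))) :=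
          mul_le_mul_of_nonneg_left (hb p h1 h2 h3) hxi
      _ = C * (p.1⁻¹ ^ (d+1) * Real.exp (-(2⁻¹ * p.1⁻¹))) := by ring
  | @csmul g c hc hg ih =>
    obtain ⟨C, hC, d, hb⟩ := ih
    obtain ⟨M, hM⟩ := (isCompact_Icc (a := -(π/4)) (b := π/4)).exists_bound_of_continuousOn
      hc.continuous.continuousOn
    refine ⟨max M 0 * C, mul_nonneg (le_max_right _ _) hC, d, fun p h1 h2 h3 => ?_⟩
    rw [norm_mul]
    have h4 : ‖c p.2‖ ≤ max M 0 :=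
      le_trans (hM p.2 ⟨by linarith [(abs_lt.1 h3).1], le_of_lt (abs_lt.1 h3).2⟩)
        (le_max_left _ _)
    calc ‖c p.2‖ * ‖g p‖ ≤ max M 0 * (C * (p.1⁻¹ ^ d * Real.exp (-(2⁻¹ * p.1⁻¹)))) :=
          mul_le_mul h4 (hb p h1 h2 h3) (norm_nonneg _) (le_max_right _ _)
      _ = max M 0 * C * (p.1⁻¹ ^ d * Real.exp (-(2⁻¹ * p.1⁻¹))) := by ring
  | @add g h hg hh ihg ihh =>
    obtain ⟨C1, hC1, d1, hb1⟩ := ihg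
    obtain ⟨C2, hC2, d2, hb2⟩ := ihh
    refine ⟨C1 + C2, by linarith, max d1 d2, fun p h1 h2 h3 => ?_⟩
    have hxi : (1:ℝ) ≤ p.1⁻¹ := (one_le_inv_iff₀).2 ⟨h1, le_of_lt h2⟩
    have m1 : p.1⁻¹ ^ d1 ≤ p.1⁻¹ ^ (max d1 d2) := pow_le_pow_right₀ hxi (le_max_left _ _)
    have m2 : p.1⁻¹ ^ d2 ≤ p.1⁻¹ ^ (max d1 d2) := pow_le_pow_right₀ hxi (le_max_right _ _)
    have he : (0:ℝ) < Real.exp (-(2⁻¹ * p.1⁻¹)) := Real.exp_pos _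
    calc ‖g p + h p‖ ≤ ‖g p‖ + ‖h p‖ := norm_add_le _ _
      _ ≤ C1 * (p.1⁻¹ ^ d1 * Real.exp (-(2⁻¹ * p.1⁻¹)))
          + C2 * (p.1⁻¹ ^ d2 * Real.exp (-(2⁻¹ * p.1⁻¹))) :=
          add_le_add (hb1 p h1 h2 h3) (hb2 p h1 h2 h3)
      _ ≤ (C1 + C2) * (p.1⁻¹ ^ (max d1 d2) * Real.exp (-(2⁻¹ * p.1⁻¹))) := by
          have e1 := mul_le_mul_of_nonneg_left (mul_le_mul_of_nonneg_right m1 he.le) hC1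
          have e2 := mul_le_mul_of_nonneg_left (mul_le_mul_of_nonneg_right m2 he.le) hC2
          nlinarith [e1, e2]

lemma decay (d : ℕ) :
    Tendsto (fun x : ℝ => x⁻¹ ^ d * Real.exp (-(2⁻¹ * x⁻¹))) (nhdsWithin 0 (Set.Ioi 0)) (nhds 0) := by
  have hc : Tendsto (fun t : ℝ => 2⁻¹ * t) atTop atTop :=
    Tendsto.const_mul_atTop (by norm_num) tendsto_id
  have h0 : Tendsto (fun t : ℝ => (2:ℝ)^d * ((2⁻¹*t) ^ d * Real.exp (-(2⁻¹ * t)))) atTop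
      (nhds ((2:ℝ)^d * 0)) :=
    ((tendsto_pow_mul_exp_neg_atTop_nhds_zero d).comp hc).const_mul _
  rw [mul_zero] at h0
  have h1 : (fun t : ℝ => (2:ℝ)^d * ((2⁻¹*t) ^ d * Real.exp (-(2⁻¹ * t))))
      = fun t : ℝ => t ^ d * Real.exp (-(2⁻¹ * t)) := by
    funext t
    rw [mul_pow]
    have : (2:ℝ)^d * ((2:ℝ)⁻¹^d) = 1 := by
      rw [← mul_pow]; norm_num
    linear_combination (t ^ d * Real.exp (-(2⁻¹ * t))) * this
  rw [h1] at h0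
  exact h0.comp tendsto_inv_nhdsGT_zero

lemma flat_aux {C : ℝ} (hC : 0 ≤ C) (d : ℕ) {ε : ℝ} (hε : 0 < ε) :
    ∃ δ > 0, δ ≤ 1 ∧ ∀ x : ℝ, 0 < x → x < δ →
      C * (x⁻¹ ^ d * Real.exp (-(2⁻¹ * x⁻¹))) ≤ ε * x := by
  set ε' := ε / (C + 1) with hε'def
  have hC1 : (0:ℝ) < C + 1 := by linarith
  have hε' : 0 < ε' := div_pos hε hC1
  have hev : ∀ᶠ x in nhdsWithin 0 (Set.Ioi (0:ℝ)),
      x⁻¹ ^ (d+1) * Real.exp (-(2⁻¹ * x⁻¹)) < ε' :=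
    (decay (d+1)).eventually_lt_const hε'
  rw [eventually_nhdsWithin_iff, Metric.eventually_nhds_iff] at hev
  obtain ⟨δ', hδ', h⟩ := hev
  refine ⟨min δ' 1, lt_min hδ' one_pos, min_le_right _ _, fun x hx hxδ => ?_⟩
  have hx1 : x < 1 := lt_of_lt_of_le hxδ (min_le_right _ _)
  have hxδ' : dist x 0 < δ' := by
    rw [Real.dist_eq, sub_zero, abs_of_pos hx]; exact lt_of_lt_of_le hxδ (min_le_left _ _)
  have hlt := h hxδ' hx
  have key : x⁻¹ ^ d * Real.exp (-(2⁻¹ * x⁻¹))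
      = (x⁻¹ ^ (d+1) * Real.exp (-(2⁻¹ * x⁻¹))) * x := by
    rw [pow_succ]
    field_simp
  rw [key, ← mul_assoc]
  have h2 : C * (x⁻¹ ^ (d+1) * Real.exp (-(2⁻¹ * x⁻¹))) ≤ C * ε' :=
    mul_le_mul_of_nonneg_left hlt.le hC
  have h3 : ε' * (C + 1) = ε := div_mul_cancel₀ _ (ne_of_gt hC1)
  have h4 : C * ε' ≤ ε := by nlinarith
  nlinarith [mul_le_mul_of_nonneg_right (le_trans h2 h4) hx.le]

lemma MSym.flat {g} (hg : MSym g) {ε : ℝ} (hε : 0 < ε) :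
    ∃ δ > 0, δ ≤ 1 ∧ ∀ p : ℝ×ℝ, 0 < p.1 → p.1 < δ → |p.2| < π/4 → ‖g p‖ ≤ ε * p.1 := by
  obtain ⟨C, hC, d, hb⟩ := hg.bound
  obtain ⟨δ, hδ, hδ1, hk⟩ := flat_aux hC d hε
  exact ⟨δ, hδ, hδ1, fun p h1 h2 h3 =>
    le_trans (hb p h1 (lt_of_lt_of_le h2 hδ1) h3) (hk p.1 h1 h2)⟩

lemma clm_ext2 {E : Type*} [NormedAddCommGroup E] [NormedSpace ℝ E] {L M : ℝ×ℝ →L[ℝ] E}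
    (h1 : L (1,0) = M (1,0)) (h2 : L (0,1) = M (0,1)) : L = M := by
  apply ContinuousLinearMap.ext
  rintro ⟨a, b⟩
  have h : ((a,b) : ℝ×ℝ) = a • ((1:ℝ),(0:ℝ)) + b • ((0:ℝ),(1:ℝ)) := by
    simp [Prod.ext_iff]
  rw [h, map_add, map_add, map_smul, map_smul, map_smul, map_smul, h1, h2]

lemma hasFDerivAt_pair {g : ℝ×ℝ → ℂ} {L : ℝ×ℝ →L[ℝ] ℂ} {a b : ℂ} {p : ℝ×ℝ}
    (hg : HasFDerivAt g L p) (ha : L (1,0) = a) (hb : L (0,1) = b) :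
    HasFDerivAt g (a • P1 + b • P2) p := by
  have h : L = a • P1 + b • P2 := clm_ext2 (by simp [ha]) (by simp [hb])
  exact h ▸ hg

lemma contDiff_cexpm : ContDiff ℝ (⊤:ℕ∞) (fun y : ℝ => Complex.exp (-(Complex.I * y))) :=
  ((contDiff_const.mul Complex.ofRealCLM.contDiff).neg).cexp

def Bx : ℝ×ℝ → ℂ := fun p =>
  Complex.exp (-(Complex.I * p.2)) * ((p.1:ℂ)⁻¹ * ((p.1:ℂ)⁻¹ * baseF p))
def By : ℝ×ℝ → ℂ := fun p =>
  (Complex.I * Complex.exp (-(Complex.I * p.2))) * ((p.1:ℂ)⁻¹ * baseF p)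

lemma symBx : MSym Bx := .csmul _ contDiff_cexpm (.invMul (.invMul .base))
lemma symBy : MSym By :=
  .csmul _ (contDiff_const.mul contDiff_cexpm) (.invMul .base)

lemma inv_hasFDerivAt {p : ℝ×ℝ} (hp : 0 < p.1) :
    HasFDerivAt (fun q : ℝ×ℝ => ((q.1:ℂ))⁻¹) ((-(((p.1:ℂ))^2)⁻¹) • P1) p := by
  have hx : (p.1:ℂ) ≠ 0 := Complex.ofReal_ne_zero.2 (ne_of_gt hp)
  exact (hasDerivAt_inv hx).comp_hasFDerivAt p P1.hasFDerivAt

lemma cexpm_hasFDerivAt (p : ℝ×ℝ) :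
    HasFDerivAt (fun q : ℝ×ℝ => Complex.exp (-(Complex.I * q.2)))
      (Complex.exp (-(Complex.I * p.2)) • ((-Complex.I) • P2)) p := by
  have hinner : HasFDerivAt (fun q : ℝ×ℝ => -(Complex.I * (q.2:ℂ))) ((-Complex.I) • P2) p :=
    ((-Complex.I) • P2).hasFDerivAt.congr_of_eventuallyEq
      (Filter.Eventually.of_forall fun q => by simp [neg_mul])
  exact (Complex.hasDerivAt_exp _).comp_hasFDerivAt p hinner

lemma baseF_hasFDerivAt {p : ℝ×ℝ} (hp : 0 < p.1) :
    HasFDerivAt baseF (Bx p • P1 + By p • P2) p := by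
  have hx : (p.1:ℂ) ≠ 0 := Complex.ofReal_ne_zero.2 (ne_of_gt hp)
  have hprod := (cexpm_hasFDerivAt p).mul (inv_hasFDerivAt hp)
  have hb := (Complex.hasDerivAt_exp _).comp_hasFDerivAt p hprod.neg
  refine hasFDerivAt_pair hb ?_ ?_
  · show Complex.exp _ • _ = Bx p
    simp [Bx, baseF]
    rw [pow_two, mul_inv]
    ring
  · show Complex.exp _ • _ = By p
    simp [By, baseF]
    ring

lemma MSym.derivPair {g} (hg : MSym g) : ∃ gx gy, MSym gx ∧ MSym gy ∧
    ∀ p : ℝ×ℝ, 0 < p.1 → HasFDerivAt g (gx p • P1 + gy p • P2) p := by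
  induction hg with
  | base => exact ⟨Bx, By, symBx, symBy, fun p hp => baseF_hasFDerivAt hp⟩
  | @invMul g hg ih =>
    obtain ⟨gx, gy, hgx, hgy, hd⟩ := ih
    refine ⟨fun p => (p.1:ℂ)⁻¹ * gx p + (-1 : ℂ) * ((p.1:ℂ)⁻¹ * ((p.1:ℂ)⁻¹ * g p)),
      fun p => (p.1:ℂ)⁻¹ * gy p,
      .add (.invMul hgx) (.csmul (fun _ => (-1:ℂ)) contDiff_const (.invMul (.invMul hg))),
      .invMul hgy, fun p hp => ?_⟩
    refine hasFDerivAt_pair ((inv_hasFDerivAt hp).mul (hd p hp)) ?_ ?_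
    · simp
      rw [pow_two, mul_inv]
      ring
    · simp
  | @csmul g c hc hg ih =>
    obtain ⟨gx, gy, hgx, hgy, hd⟩ := ih
    have hc' : ContDiff ℝ (⊤:ℕ∞) (deriv c) := (contDiff_infty_iff_deriv.mp hc).2
    refine ⟨fun p => c p.2 * gx p,
      fun p => deriv c p.2 * g p + c p.2 * gy p,
      .csmul c hc hgx,
      .add (.csmul _ hc' hg) (.csmul c hc hgy), fun p hp => ?_⟩
    have hcd : HasFDerivAt (fun q : ℝ×ℝ => c q.2)
        ((ContinuousLinearMap.smulRight (1 : ℝ →L[ℝ] ℝ) (deriv c p.2)).comp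
          (ContinuousLinearMap.snd ℝ ℝ ℝ)) p :=
      ((hc.differentiable (by simp) p.2).hasDerivAt.hasFDerivAt).comp p
        (ContinuousLinearMap.snd ℝ ℝ ℝ).hasFDerivAt
    refine hasFDerivAt_pair (hcd.mul (hd p hp)) ?_ ?_
    · simp
    · simp; ring
  | @add g h hg hh ihg ihh =>
    obtain ⟨gx, gy, hgx, hgy, hdg⟩ := ihg
    obtain ⟨hx, hy, hhx, hhy, hdh⟩ := ihh
    exact ⟨fun p => gx p + hx p, fun p => gy p + hy p, .add hgx hhx, .add hgy hhy,
      fun p hp => hasFDerivAt_pair ((hdg p hp).add (hdh p hp)) (by simp) (by simp)⟩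

lemma cut_eq_zero {g : ℝ×ℝ → ℂ} {p : ℝ×ℝ} (hp : ¬ 0 < p.1) : cut g p = 0 := if_neg hp

lemma cut_eq {g : ℝ×ℝ → ℂ} {p : ℝ×ℝ} (hp : 0 < p.1) : cut g p = g p := if_pos hp

lemma isOpen_pos : IsOpen {q : ℝ×ℝ | 0 < q.1} := isOpen_lt continuous_const continuous_fst

lemma cut_hasFDerivAt {g gx gy : ℝ×ℝ → ℂ} (hg : MSym g)
    (hgd : ∀ p : ℝ×ℝ, 0 < p.1 → HasFDerivAt g (gx p • P1 + gy p • P2) p)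
    {p : ℝ×ℝ} (hp : |p.2| < π/4) :
    HasFDerivAt (cut g) (cut gx p • P1 + cut gy p • P2) p := by
  rcases lt_trichotomy 0 p.1 with h | h | h
  · have hev : cut g =ᶠ[nhds p] g := by
      filter_upwards [isOpen_pos.mem_nhds h] with q hq
      exact cut_eq hq
    rw [cut_eq (g := gx) h, cut_eq (g := gy) h]
    exact (hgd p h).congr_of_eventuallyEq hev
  · -- p.1 = 0
    rw [cut_eq_zero (by rw [← h]; exact lt_irrefl 0), cut_eq_zero (by rw [← h]; exact lt_irrefl 0)]
    have hzero : (0:ℂ) • P1 + (0:ℂ) • P2 = 0 := by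
      apply ContinuousLinearMap.ext
      intro v
      simp
    rw [hzero]
    rw [hasFDerivAt_iff_isLittleO_nhds_zero]
    rw [Asymptotics.isLittleO_iff]
    intro c hc
    obtain ⟨δ, hδ, hδ1, hflat⟩ := hg.flat hc
    have hy : |p.2| < π/4 := hp
    rw [Metric.eventually_nhds_iff]
    refine ⟨min δ (π/4 - |p.2|), lt_min hδ (by linarith), fun h' hh' => ?_⟩
    rw [dist_zero_right] at hh'
    have h1 : |h'.1| ≤ ‖h'‖ := by
      rw [← Real.norm_eq_abs]; exact norm_fst_le h'
    have h2 : |h'.2| ≤ ‖h'‖ := by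
      rw [← Real.norm_eq_abs]; exact norm_snd_le h'
    simp only [ContinuousLinearMap.zero_apply, sub_zero]
    have hcp : cut g p = 0 := cut_eq_zero (by rw [← h]; exact lt_irrefl 0)
    rw [hcp, sub_zero]
    by_cases hq : 0 < (p + h').1
    · rw [cut_eq hq]
      have hq1 : (p + h').1 = h'.1 := by
        show p.1 + h'.1 = h'.1
        rw [← h, zero_add]
      have hb1 : (p+h').1 < δ := by
        rw [hq1]
        calc h'.1 ≤ |h'.1| := le_abs_self _
          _ ≤ ‖h'‖ := h1
          _ < _ := hh'
          _ ≤ δ := min_le_left _ _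
      have hb2 : |(p+h').2| < π/4 := by
        show |p.2 + h'.2| < π/4
        have : |h'.2| < π/4 - |p.2| := lt_of_le_of_lt h2 (lt_of_lt_of_le hh' (min_le_right _ _))
        calc |p.2 + h'.2| ≤ |p.2| + |h'.2| := abs_add_le _ _
          _ < π/4 := by linarith
      calc ‖g (p + h')‖ ≤ c * (p + h').1 := hflat _ hq hb1 hb2
        _ ≤ c * ‖h'‖ := by
            apply mul_le_mul_of_nonneg_left _ hc.le
            rw [hq1]
            exact le_trans (le_abs_self _) h1
    · rw [cut_eq_zero hq]
      simp only [norm_zero]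
      positivity
  · have hev : cut g =ᶠ[nhds p] (fun _ => (0:ℂ)) := by
      have hopen : IsOpen {q : ℝ×ℝ | q.1 < 0} := isOpen_lt continuous_fst continuous_const
      filter_upwards [hopen.mem_nhds h] with q hq
      exact cut_eq_zero (not_lt_of_gt hq)
    rw [cut_eq_zero (not_lt_of_gt h), cut_eq_zero (not_lt_of_gt h)]
    have hzero : (0:ℂ) • P1 + (0:ℂ) • P2 = 0 := by
      apply ContinuousLinearMap.ext
      intro v
      simp
    rw [hzero]
    exact (hasFDerivAt_const (0:ℂ) p).congr_of_eventuallyEq hev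

def W : Set (ℝ×ℝ) := {p : ℝ×ℝ | |p.2| < π/4}

lemma isOpen_W : IsOpen W := isOpen_lt (continuous_snd.abs) continuous_const

section NiceSection

variable {E : Type*} [NormedAddCommGroup E] [NormedSpace ℝ E] [NormedSpace ℂ E]
  [IsScalarTower ℝ ℂ E] [SMulCommClass ℝ ℂ E]

inductive NiceOn : (ℝ×ℝ → E) → Prop
  | single (a : ℝ×ℝ → ℂ) (ha : MSym a) (v : E) : NiceOn (fun p => cut a p • v)
  | add {g h : ℝ×ℝ → E} : NiceOn g → NiceOn h → NiceOn (fun p => g p + h p)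
  | congr {g h : ℝ×ℝ → E} : NiceOn g → (∀ p ∈ W, h p = g p) → NiceOn h

lemma NiceOn.zero_of {g : ℝ×ℝ → E} (hg : NiceOn g) : ∀ p ∈ W, p.1 ≤ 0 → g p = 0 := by
  induction hg with
  | single a ha v =>
    intro p _ hp
    show cut a p • v = 0
    rw [cut_eq_zero (not_lt.2 hp), zero_smul]
  | add hg hh ihg ihh =>
    intro p hp h0
    show _ + _ = 0
    rw [ihg p hp h0, ihh p hp h0, add_zero]
  | congr hg heq ih => exact fun p hp h0 => by rw [heq p hp, ih p hp h0]

def Tv (v : E) : ℂ →L[ℝ] E := (ContinuousLinearMap.toSpanSingleton ℂ v).restrictScalars ℝ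

@[simp] lemma Tv_apply (v : E) (z : ℂ) : Tv v z = z • v := rfl

lemma Tcomp (v : E) (c : ℂ) (L : ℝ×ℝ →L[ℝ] ℂ) :
    (Tv v).comp (c • L) = c • ((Tv v).comp L) := by
  apply ContinuousLinearMap.ext
  intro h
  simp [smul_smul]

lemma NiceOn.hasFDeriv {g : ℝ×ℝ → E} (hg : NiceOn g) :
    ∃ D : ℝ×ℝ → (ℝ×ℝ →L[ℝ] E), NiceOn D ∧ ∀ p ∈ W, HasFDerivAt g (D p) p := by
  induction hg with
  | single a ha v =>
    obtain ⟨ax, ay, hax, hay, hd⟩ := ha.derivPair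
    refine ⟨fun p => cut ax p • ((Tv v).comp P1) + cut ay p • ((Tv v).comp P2),
      .add (.single ax hax _) (.single ay hay _), fun p hp => ?_⟩
    have hcut := cut_hasFDerivAt ha hd hp
    have h1 : HasFDerivAt (fun p => cut a p • v)
        ((Tv v).comp (cut ax p • P1 + cut ay p • P2)) p := by
      refine ((Tv v).hasFDerivAt.comp p hcut).congr_of_eventuallyEq ?_
      exact Filter.Eventually.of_forall fun q => by simp [Function.comp]
    have h2 : (Tv v).comp (cut ax p • P1 + cut ay p • P2)
        = cut ax p • ((Tv v).comp P1) + cut ay p • ((Tv v).comp P2) := by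
      rw [ContinuousLinearMap.comp_add, Tcomp, Tcomp]
    rw [h2] at h1
    exact h1
  | add hg hh ihg ihh =>
    obtain ⟨D1, hD1, h1⟩ := ihg
    obtain ⟨D2, hD2, h2⟩ := ihh
    exact ⟨fun p => D1 p + D2 p, .add hD1 hD2, fun p hp => (h1 p hp).add (h2 p hp)⟩
  | congr hg heq ih =>
    obtain ⟨D, hD, hd⟩ := ih
    refine ⟨D, hD, fun p hp => (hd p hp).congr_of_eventuallyEq ?_⟩
    filter_upwards [isOpen_W.mem_nhds hp] using heq

lemma NiceOn.differentiableOn {g : ℝ×ℝ → E} (hg : NiceOn g) :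
    DifferentiableOn ℝ g W := by
  obtain ⟨D, hD, hd⟩ := hg.hasFDeriv
  exact fun p hp => ((hd p hp).differentiableAt).differentiableWithinAt

lemma NiceOn.fderiv_nice {g : ℝ×ℝ → E} (hg : NiceOn g) : NiceOn (fderiv ℝ g) := by
  obtain ⟨D, hD, hd⟩ := hg.hasFDeriv
  exact .congr hD (fun p hp => (hd p hp).fderiv)

lemma NiceOn.continuousOn {g : ℝ×ℝ → E} (hg : NiceOn g) : ContinuousOn g W :=
  hg.differentiableOn.continuousOn

lemma NiceOn.map {F : Type*} [NormedAddCommGroup F] [NormedSpace ℝ F] [NormedSpace ℂ F]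
    [IsScalarTower ℝ ℂ F] [SMulCommClass ℝ ℂ F]
    (e : E → F) (hadd : ∀ u v, e (u + v) = e u + e v)
    (hsmul : ∀ (c : ℂ) (u : E), e (c • u) = c • e u)
    {g : ℝ×ℝ → E} (hg : NiceOn g) : NiceOn (fun p => e (g p)) := by
  induction hg with
  | single a ha v => exact .congr (.single a ha (e v)) (fun p _ => hsmul _ _)
  | add hg hh ihg ihh => exact .congr (.add ihg ihh) (fun p _ => hadd _ _)
  | congr hg heq ih => exact .congr ih (fun p hp => by rw [heq p hp])

end NiceSection

theorem nice_contDiffOn (n : ℕ) : ∀ {E : Type} [NormedAddCommGroup E] [NormedSpace ℝ E]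
    [NormedSpace ℂ E] [IsScalarTower ℝ ℂ E] [SMulCommClass ℝ ℂ E]
    (g : ℝ×ℝ → E), NiceOn g → ContDiffOn ℝ n g W := by
  induction n with
  | zero =>
    intro E _ _ _ _ _ g hg
    exact contDiffOn_zero.mpr hg.continuousOn
  | succ n ih =>
    intro E _ _ _ _ _ g hg
    have hcast : ((n+1 : ℕ) : WithTop ℕ∞) = (n : WithTop ℕ∞) + 1 := by norm_cast
    rw [hcast, contDiffOn_succ_iff_fderiv_of_isOpen isOpen_W]
    refine ⟨hg.differentiableOn, ?_, ih _ hg.fderiv_nice⟩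
    intro htop
    exact absurd htop (by simp)

end



lemma fFlat_eq : fFlat = cut baseF := by
  funext p
  unfold fFlat cut baseF
  split_ifs with h
  · congr 1
    rw [div_eq_mul_inv, mul_inv, Complex.exp_neg]
    ring
  · rfl

lemma Ddom_eq_W : Ddom = W := by
  ext p
  simp [Ddom, W, abs_lt]

noncomputable def K0 : ContinuousMultilinearMap ℝ (fun _ : Fin 0 => ℝ×ℝ) ℂ :=
  ContinuousMultilinearMap.constOfIsEmpty ℝ _ 1

lemma iterNice : ∀ n : ℕ, NiceOn (iteratedFDeriv ℝ n fFlat) := by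
  intro n
  induction n with
  | zero =>
    refine NiceOn.congr (.single baseF .base K0) (fun p _ => ?_)
    apply ContinuousMultilinearMap.ext
    intro m
    rw [iteratedFDeriv_zero_apply, ContinuousMultilinearMap.smul_apply]
    rw [fFlat_eq]
    simp [K0]
  | succ n ih =>
    have hsm : ∀ (c : ℂ) (L : ℝ×ℝ →L[ℝ] (ContinuousMultilinearMap ℝ (fun _ : Fin n => ℝ×ℝ) ℂ)),
        (continuousMultilinearCurryLeftEquiv ℝ (fun _ : Fin (n+1) => ℝ×ℝ) ℂ).symm (c • L)
          = c • (continuousMultilinearCurryLeftEquiv ℝ (fun _ : Fin (n+1) => ℝ×ℝ) ℂ).symm L := by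
      intro c L
      apply ContinuousMultilinearMap.ext
      intro m
      simp
    rw [iteratedFDeriv_succ_eq_comp_left, Function.comp_def]
    exact NiceOn.map _ (fun u v => map_add _ u v) hsm ih.fderiv_nice

theorem stmt_18 :
    ContDiffOn ℝ (⊤ : ℕ∞) fFlat Ddom ∧
    (∀ p ∈ Ddom,
      (p.1 : ℂ) * fderiv ℝ fFlat p ((1, 0) : ℝ × ℝ)
        + Complex.I * fderiv ℝ fFlat p ((0, 1) : ℝ × ℝ) = 0) ∧
    (∀ p ∈ Ddom, p.1 = 0 → ∀ n : ℕ, iteratedFDeriv ℝ n fFlat p = 0) ∧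
    (∀ p ∈ Ddom, 0 < p.1 → fFlat p ≠ 0) := by
  have hnice : NiceOn fFlat := by
    refine NiceOn.congr (.single baseF .base (1:ℂ)) (fun p _ => ?_)
    rw [fFlat_eq]
    simp
  refine ⟨?_, ?_, ?_, ?_⟩
  · rw [Ddom_eq_W]
    exact contDiffOn_infty.mpr fun n => nice_contDiffOn n fFlat hnice
  · intro p hp
    have hpW : |p.2| < π/4 := by rw [Ddom_eq_W] at hp; exact hp
    have hD : HasFDerivAt fFlat (cut Bx p • P1 + cut By p • P2) p := by
      rw [fFlat_eq]
      exact cut_hasFDerivAt .base (fun q hq => baseF_hasFDerivAt hq) hpW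
    rw [hD.fderiv]
    simp only [ContinuousLinearMap.add_apply, ContinuousLinearMap.smul_apply,
      P1_apply, P2_apply, smul_eq_mul]
    push_cast
    ring_nf
    by_cases h : 0 < p.1
    · rw [cut_eq h, cut_eq h]
      have hx : (p.1:ℂ) ≠ 0 := Complex.ofReal_ne_zero.2 (ne_of_gt h)
      unfold Bx By
      field_simp
      ring_nf
      simp [Complex.I_sq]
    · rw [cut_eq_zero h, cut_eq_zero h]
      ring
  · intro p hp h0 n
    exact (iterNice n).zero_of p (by rw [← Ddom_eq_W]; exact hp) (le_of_eq h0)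
  · intro p _ h
    unfold fFlat
    rw [if_pos h]
    exact Complex.exp_ne_zero _
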